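/- arXiv:1803.00827 — 3 statements merged into one kernel-verified Lean document; each statement's English description precedes it below -/
import Mathlib

section
/- For the Euclidean cost and ν absolutely continuous with respect to Lebesgue measure, for any set A ⊆ {1,…,n} of cardinality at least 2 whose indices have pairwise distinct points zⁱ, the set M⁻¹(A) has ν-measure zero. -/
open MeasureTheory

lemma hyperplane_null {d : ℕ} (v : EuclideanSpace ℝ (Fin d)) (hv : v ≠ 0) (c : ℝ) :
    volume {x : EuclideanSpace ℝ (Fin d) | inner ℝ v x = (c : ℝ)} = 0 := by
  set x0 : EuclideanSpace ℝ (Fin d) := (c / ‖v‖ ^ 2) • v with hx0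
  have hvv : (inner ℝ v v : ℝ) = ‖v‖ ^ 2 := real_inner_self_eq_norm_sq v
  have hnv : ‖v‖ ^ 2 ≠ 0 := pow_ne_zero 2 (norm_ne_zero_iff.mpr hv)
  have hx0c : (inner ℝ v x0 : ℝ) = c := by
    rw [hx0, real_inner_smul_right, hvv, div_mul_cancel₀ _ hnv]
  set s : AffineSubspace ℝ (EuclideanSpace ℝ (Fin d)) :=
    AffineSubspace.mk' x0 (LinearMap.ker (innerSL ℝ v).toLinearMap) with hs
  have hset : {x : EuclideanSpace ℝ (Fin d) | inner ℝ v x = (c : ℝ)} = (s : Set _) := by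
    ext x
    simp only [Set.mem_setOf_eq, hs, AffineSubspace.mem_coe,
      AffineSubspace.mem_mk', LinearMap.mem_ker]
    constructor
    · intro h
      have : (inner ℝ v (x -ᵥ x0) : ℝ) = 0 := by
        simp [vsub_eq_sub, inner_sub_right, h, hx0c]
      simpa using this
    · intro h
      have h0 : (inner ℝ v (x -ᵥ x0) : ℝ) = 0 := by simpa using h
      have := h0
      rw [vsub_eq_sub, inner_sub_right, hx0c, sub_eq_zero] at this
      exact this
  rw [hset]
  apply Measure.addHaar_affineSubspace
  intro htop
  have hd : s.direction = ⊤ := by rw [htop, AffineSubspace.direction_top]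
  rw [hs, AffineSubspace.direction_mk'] at hd
  have hvker : v ∈ LinearMap.ker (innerSL ℝ v).toLinearMap := hd ▸ Submodule.mem_top
  rw [LinearMap.mem_ker] at hvker
  have : (inner ℝ v v : ℝ) = 0 := by simpa using hvker
  rw [hvv] at this
  exact hnv this

/-- Euclidean cost, `ν` absolutely continuous w.r.t. Lebesgue measure: for any `A` of
cardinality at least `2` with pairwise distinct points `zⁱ`, `i ∈ A`, the set
`M⁻¹(A)` has `ν`-measure zero. -/
theorem argmin_set_null_euclidean
    {d n : ℕ} (Ω : Set (EuclideanSpace ℝ (Fin d)))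
    (ν : Measure (EuclideanSpace ℝ (Fin d)))
    (hν : ν ≪ (volume : Measure (EuclideanSpace ℝ (Fin d))))
    (z : Fin n → EuclideanSpace ℝ (Fin d)) (φ : Fin n → ℝ)
    (A : Set (Fin n)) (hA : 2 ≤ A.ncard)
    (hdist : ∀ i ∈ A, ∀ j ∈ A, i ≠ j → z i ≠ z j) :
    ν {x ∈ Ω | {i : Fin n | ∀ j : Fin n,
        (1 / 2) * ‖z i - x‖ ^ 2 - φ i ≤ (1 / 2) * ‖z j - x‖ ^ 2 - φ j} = A} = 0 := by
  obtain ⟨i, hi, j, hj, hij⟩ := (Set.one_lt_ncard A.toFinite).mp (by omega)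
  have hv : z i - z j ≠ 0 := sub_ne_zero.mpr (hdist i hi j hj hij)
  apply hν
  apply measure_mono_null _
    (hyperplane_null (z i - z j) hv
      ((1 / 2) * ‖z i‖ ^ 2 - (1 / 2) * ‖z j‖ ^ 2 + φ j - φ i))
  rintro x ⟨-, hx⟩
  have h1 : (1 / 2) * ‖z i - x‖ ^ 2 - φ i ≤ (1 / 2) * ‖z j - x‖ ^ 2 - φ j := by
    have : i ∈ {i : Fin n | ∀ j : Fin n,
        (1 / 2) * ‖z i - x‖ ^ 2 - φ i ≤ (1 / 2) * ‖z j - x‖ ^ 2 - φ j} := hx.symm ▸ hi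
    exact this j
  have h2 : (1 / 2) * ‖z j - x‖ ^ 2 - φ j ≤ (1 / 2) * ‖z i - x‖ ^ 2 - φ i := by
    have : j ∈ {i : Fin n | ∀ j : Fin n,
        (1 / 2) * ‖z i - x‖ ^ 2 - φ i ≤ (1 / 2) * ‖z j - x‖ ^ 2 - φ j} := hx.symm ▸ hj
    exact this i
  have heq := le_antisymm h1 h2
  show (inner ℝ (z i - z j) x : ℝ) = _
  rw [inner_sub_left]
  rw [norm_sub_sq_real, norm_sub_sq_real] at heq
  linarith
end

section
/- Let ψⁱ(t,x), i = 1,…,n, be functions differentiable in t at t = 0 for ν-a.e. x, with a common integrable bound on derivatives. Then the function t ↦ ∫_Ω min_i ψⁱ(t,x) dν(x) is directionally (right-)derivable at 0 with derivative ∫_Ω min_{i ∈ M(x)} ∂_t ψⁱ(0,x) dν(x), where M(x) is the argmin at t = 0. -/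
open MeasureTheory Filter

/-- Pointwise lemma: the right derivative of a min of finitely many differentiable
functions is the min of the derivatives over the argmin set. -/
lemma min_right_derivative_pointwise {n : ℕ} [NeZero n] (f : Fin n → ℝ → ℝ) (d : Fin n → ℝ)
    (hd : ∀ i, HasDerivAt (f i) (d i) 0) :
    Tendsto (fun t => ((Finset.univ.inf' Finset.univ_nonempty fun i => f i t) -
        Finset.univ.inf' Finset.univ_nonempty fun i => f i 0) / t)
      (nhdsWithin 0 (Set.Ioi 0))
      (nhds (sInf (d '' {i | ∀ j, f i 0 ≤ f j 0}))) := by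
  classical
  set M : Finset (Fin n) := Finset.univ.filter (fun i => ∀ j, f i 0 ≤ f j 0) with hM
  obtain ⟨i0, -, hi0⟩ :=
    Finset.exists_mem_eq_inf' (Finset.univ_nonempty (α := Fin n)) (fun i => f i 0)
  have hmin : ∀ j, f i0 0 ≤ f j 0 := fun j => hi0 ▸ Finset.inf'_le _ (Finset.mem_univ j)
  have hi0M : i0 ∈ M := by
    simp only [hM, Finset.mem_filter, Finset.mem_univ, true_and]
    exact hmin
  have hMne : M.Nonempty := ⟨i0, hi0M⟩
  have hMval : ∀ i ∈ M, f i 0 = f i0 0 := fun i hi =>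
    le_antisymm ((Finset.mem_filter.1 hi).2 i0) (hmin i)
  have hMinf0 : M.inf' hMne (fun i => f i 0) = f i0 0 :=
    le_antisymm (Finset.inf'_le _ hi0M) (Finset.le_inf' _ _ fun i hi => (hMval i hi).ge)
  have hset : {i : Fin n | ∀ j, f i 0 ≤ f j 0} = ↑M := by
    ext i; simp [hM]
  have hsInf : sInf (d '' {i | ∀ j, f i 0 ≤ f j 0}) = M.inf' hMne d := by
    rw [hset, Finset.inf'_eq_csInf_image]
  rw [hsInf]
  -- limit of the min over M
  have hMt : Tendsto (fun t => M.inf' hMne (fun i => f i t)) (nhds 0)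
      (nhds (f i0 0)) := by
    have h1 : Tendsto (fun t => M.inf' hMne (fun i => f i t)) (nhds 0)
        (nhds (M.inf' hMne (fun i => f i 0))) :=
      Filter.Tendsto.finset_inf'_nhds_apply hMne (fun i _ => ((hd i).continuousAt).tendsto)
    rwa [hMinf0] at h1
  -- eventually, the min over univ coincides with the min over M
  have hall : ∀ i : Fin n, ∀ᶠ t in nhdsWithin (0:ℝ) (Set.Ioi 0),
      M.inf' hMne (fun j => f j t) ≤ f i t := by
    intro i
    by_cases hi : i ∈ M
    · exact Filter.Eventually.of_forall fun t => Finset.inf'_le _ hi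
    · have hlt : f i0 0 < f i 0 := by
        simp only [hM, Finset.mem_filter, Finset.mem_univ, true_and, not_forall, not_le] at hi
        obtain ⟨j, hj⟩ := hi
        exact lt_of_le_of_lt (hmin j) hj
      have := hMt.eventually_lt ((hd i).continuousAt.tendsto) hlt
      exact (this.filter_mono nhdsWithin_le_nhds).mono fun t ht => ht.le
  have hev : ∀ᶠ t in nhdsWithin (0:ℝ) (Set.Ioi 0),
      Finset.univ.inf' Finset.univ_nonempty (fun i => f i t)
        = M.inf' hMne (fun i => f i t) := by
    filter_upwards [eventually_all.2 hall] with t ht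
    refine le_antisymm ?_ (Finset.le_inf' _ _ fun i _ => ht i)
    obtain ⟨i, hiM, hie⟩ := Finset.exists_mem_eq_inf' hMne (fun i => f i t)
    rw [hie]; exact Finset.inf'_le _ (Finset.mem_univ i)
  -- the limit of the M-min difference quotient
  have hkey : Tendsto (fun t => M.inf' hMne (fun i => (f i t - f i 0) / t))
      (nhdsWithin 0 (Set.Ioi 0)) (nhds (M.inf' hMne d)) := by
    refine Filter.Tendsto.finset_inf'_nhds_apply hMne fun i _ => ?_
    have hs := (hasDerivAt_iff_tendsto_slope.1 (hd i)).mono_left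
      (nhdsWithin_mono 0 fun t (ht : t ∈ Set.Ioi 0) =>
        Set.mem_compl_singleton_iff.2 (ne_of_gt ht))
    refine hs.congr fun t => ?_
    simp [slope_def_field, div_eq_inv_mul]
  refine hkey.congr' ?_
  filter_upwards [hev, self_mem_nhdsWithin] with t heq (htpos : t ∈ Set.Ioi 0)
  have ht0 : (0:ℝ) < t := htpos
  have hmono : Monotone (fun y : ℝ => (y - f i0 0) / t) := by
    intro a b hab
    have h1 : a - f i0 0 ≤ b - f i0 0 := by linarith
    dsimp only
    gcongr
  have hcomp : ((M.inf' hMne fun i => f i t) - f i0 0) / t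
      = M.inf' hMne fun i => (f i t - f i0 0) / t :=
    Finset.apply_inf'_eq_inf'_comp hMne (fun y : ℝ => (y - f i0 0) / t)
      (fun a b => hmono.map_min)
  have h3 : M.inf' hMne (fun i => (f i t - f i 0) / t)
      = M.inf' hMne (fun i => (f i t - f i0 0) / t) :=
    Finset.inf'_congr hMne rfl (fun i hi => by rw [hMval i hi])
  rw [h3, heq, hi0, ← hcomp]

/-- The function `t ↦ ∫ min_i ψⁱ(t,x) dν(x)` is right-derivable at `0` with derivative
`∫ min_{i ∈ M(x)} ∂ₜψⁱ(0,x) dν(x)`, where `M(x)` is the argmin set at `t = 0`. -/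
theorem min_integral_right_derivative
    {Ω : Type*} [MeasurableSpace Ω] (ν : Measure Ω) [IsFiniteMeasure ν]
    {n : ℕ} [NeZero n] (ε : ℝ) (hε : 0 < ε)
    (ψ : Fin n → ℝ → Ω → ℝ) (ψ' : Fin n → Ω → ℝ) (h : Ω → ℝ)
    (hmeas : ∀ i t, Measurable (ψ i t))
    (hint : ∀ t ∈ Set.Ico (0 : ℝ) ε,
      Integrable (fun x => Finset.univ.inf' Finset.univ_nonempty
        (fun i : Fin n => ψ i t x)) ν)
    (hh : Integrable h ν)
    (hderiv : ∀ i : Fin n, ∀ᵐ x ∂ν, HasDerivAt (fun t => ψ i t x) (ψ' i x) 0)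
    (hbound : ∀ i : Fin n, ∀ t ∈ Set.Ico (0 : ℝ) ε,
      ∀ᵐ x ∂ν, |ψ i t x - ψ i 0 x| ≤ t * h x)
    (hint' : Integrable (fun x =>
      sInf ((fun i => ψ' i x) '' {i : Fin n | ∀ j : Fin n, ψ i 0 x ≤ ψ j 0 x})) ν) :
    Tendsto (fun t : ℝ =>
        ((∫ x, Finset.univ.inf' Finset.univ_nonempty (fun i : Fin n => ψ i t x) ∂ν) -
          ∫ x, Finset.univ.inf' Finset.univ_nonempty (fun i : Fin n => ψ i 0 x) ∂ν) / t)
      (nhdsWithin 0 (Set.Ioi 0))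
      (nhds (∫ x,
        sInf ((fun i => ψ' i x) '' {i : Fin n | ∀ j : Fin n, ψ i 0 x ≤ ψ j 0 x}) ∂ν)) := by
  have h0ε : (0:ℝ) ∈ Set.Ico (0:ℝ) ε := ⟨le_refl _, hε⟩
  have hIoo : Set.Ioo (0:ℝ) ε ∈ nhdsWithin (0:ℝ) (Set.Ioi 0) :=
    Ioo_mem_nhdsGT_of_mem ⟨le_refl _, hε⟩
  set F : ℝ → Ω → ℝ := fun t x =>
    ((Finset.univ.inf' Finset.univ_nonempty fun i : Fin n => ψ i t x) -
      Finset.univ.inf' Finset.univ_nonempty fun i : Fin n => ψ i 0 x) / t with hF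
  have key : Tendsto (fun t => ∫ x, F t x ∂ν) (nhdsWithin 0 (Set.Ioi 0))
      (nhds (∫ x,
        sInf ((fun i => ψ' i x) '' {i : Fin n | ∀ j : Fin n, ψ i 0 x ≤ ψ j 0 x}) ∂ν)) := by
    refine tendsto_integral_filter_of_dominated_convergence h ?_ ?_ hh ?_
    · filter_upwards [hIoo] with t ht
      exact (((hint t ⟨ht.1.le, ht.2⟩).sub (hint 0 h0ε)).div_const t).aestronglyMeasurable
    · filter_upwards [hIoo] with t ht
      have hb : ∀ᵐ x ∂ν, ∀ i : Fin n, |ψ i t x - ψ i 0 x| ≤ t * h x :=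
        (ae_all_iff).2 fun i => hbound i t ⟨ht.1.le, ht.2⟩
      filter_upwards [hb] with x hx
      have habs : |(Finset.univ.inf' Finset.univ_nonempty fun i : Fin n => ψ i t x) -
          Finset.univ.inf' Finset.univ_nonempty fun i : Fin n => ψ i 0 x| ≤ t * h x := by
        rw [abs_sub_le_iff]
        constructor
        · obtain ⟨i, -, hie⟩ := Finset.exists_mem_eq_inf'
            (Finset.univ_nonempty (α := Fin n)) (fun i => ψ i 0 x)
          rw [hie]
          have h1 : Finset.univ.inf' Finset.univ_nonempty (fun i : Fin n => ψ i t x)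
              ≤ ψ i t x := Finset.inf'_le _ (Finset.mem_univ i)
          have h2 := (abs_le.1 (hx i)).2
          linarith
        · obtain ⟨i, -, hie⟩ := Finset.exists_mem_eq_inf'
            (Finset.univ_nonempty (α := Fin n)) (fun i => ψ i t x)
          rw [hie]
          have h1 : Finset.univ.inf' Finset.univ_nonempty (fun i : Fin n => ψ i 0 x)
              ≤ ψ i 0 x := Finset.inf'_le _ (Finset.mem_univ i)
          have h2 := (abs_le.1 (hx i)).1
          linarith
      have : ‖F t x‖ = |(Finset.univ.inf' Finset.univ_nonempty fun i : Fin n => ψ i t x) -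
          Finset.univ.inf' Finset.univ_nonempty fun i : Fin n => ψ i 0 x| / t := by
        rw [hF]; rw [Real.norm_eq_abs, abs_div, abs_of_pos ht.1]
      rw [this, div_le_iff₀ ht.1]
      linarith [habs]
    · have hda : ∀ᵐ x ∂ν, ∀ i : Fin n, HasDerivAt (fun t => ψ i t x) (ψ' i x) 0 :=
        (ae_all_iff).2 hderiv
      filter_upwards [hda] with x hx
      exact min_right_derivative_pointwise (fun i t => ψ i t x) (fun i => ψ' i x) hx
  refine key.congr' ?_
  filter_upwards [hIoo] with t ht
  rw [hF]
  simp only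
  rw [MeasureTheory.integral_div, MeasureTheory.integral_sub
    (hint t ⟨ht.1.le, ht.2⟩) (hint 0 h0ε)]
end

section
/- Suppose ν(M⁻¹(A)) = 0 whenever |A| ≥ 2, f(z,φ,x) is continuous in (z,φ) for ν-a.e. x, and |f(z,φ,x)| ≤ l(x) with l ∈ L¹(ν). Then F_i(z,φ) = ∫_{L_i(z,φ)} f(z,φ,x) dν(x) is continuous in (z,φ). -/
open MeasureTheory

/-- Continuity of the cell integrals `F_i(z,φ) = ∫_{L_i(z,φ)} f(z,φ,x) dν(x)` under the
assumption that argmin sets of cardinality `≥ 2` are `ν`-null. -/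
theorem cell_integral_continuous
    {d n : ℕ} (Ω : Set (EuclideanSpace ℝ (Fin d))) (hΩ : MeasurableSet Ω)
    (ν : Measure (EuclideanSpace ℝ (Fin d))) [IsFiniteMeasure ν]
    (c : EuclideanSpace ℝ (Fin d) → EuclideanSpace ℝ (Fin d) → ℝ)
    (hc : Continuous fun p : EuclideanSpace ℝ (Fin d) × EuclideanSpace ℝ (Fin d) =>
      c p.1 p.2)
    (f : (Fin n → EuclideanSpace ℝ (Fin d)) → (Fin n → ℝ) → EuclideanSpace ℝ (Fin d) → ℝ)
    (l : EuclideanSpace ℝ (Fin d) → ℝ) (hl : Integrable l ν)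
    (hfmeas : ∀ z φ, AEStronglyMeasurable (f z φ) ν)
    (hfcont : ∀ᵐ x ∂ν,
      Continuous fun p : (Fin n → EuclideanSpace ℝ (Fin d)) × (Fin n → ℝ) =>
        f p.1 p.2 x)
    (hfbound : ∀ z φ, ∀ᵐ x ∂ν, |f z φ x| ≤ l x)
    (hnull : ∀ (z : Fin n → EuclideanSpace ℝ (Fin d)) (φ : Fin n → ℝ)
      (A : Set (Fin n)), 2 ≤ A.ncard →
      ν {x ∈ Ω | {i : Fin n | ∀ j : Fin n, c (z i) x - φ i ≤ c (z j) x - φ j} = A} = 0)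
    (i : Fin n) :
    Continuous fun p : (Fin n → EuclideanSpace ℝ (Fin d)) × (Fin n → ℝ) =>
      ∫ x in {x ∈ Ω | ∀ j : Fin n, c (p.1 i) x - p.2 i ≤ c (p.1 j) x - p.2 j},
        f p.1 p.2 x ∂ν := by
  classical
  set S : (Fin n → EuclideanSpace ℝ (Fin d)) × (Fin n → ℝ) → Set (EuclideanSpace ℝ (Fin d)) :=
    fun p => {x ∈ Ω | ∀ j : Fin n, c (p.1 i) x - p.2 i ≤ c (p.1 j) x - p.2 j} with hSdef
  have hcx : ∀ a : EuclideanSpace ℝ (Fin d), Continuous fun x => c a x := fun a =>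
    hc.comp (Continuous.prodMk_right a)
  have hSmeas : ∀ p, MeasurableSet (S p) := by
    intro p
    have : S p = Ω ∩ ⋂ j : Fin n,
        {x : EuclideanSpace ℝ (Fin d) | c (p.1 i) x - p.2 i ≤ c (p.1 j) x - p.2 j} := by
      ext x; simp [hSdef, Set.mem_iInter]
    rw [this]
    exact hΩ.inter (MeasurableSet.iInter fun j =>
      (isClosed_le ((hcx (p.1 i)).sub continuous_const)
        ((hcx (p.1 j)).sub continuous_const)).measurableSet)
  rw [continuous_iff_continuousAt]
  rintro ⟨z₀, φ₀⟩
  -- a.e. the argmin set at (z₀, φ₀) is a singleton (on Ω)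
  have hae : ∀ᵐ x ∂ν, x ∈ Ω →
      ∃ j : Fin n, {k : Fin n | ∀ l : Fin n,
        c (z₀ k) x - φ₀ k ≤ c (z₀ l) x - φ₀ l} = {j} := by
    rw [ae_iff]
    have hnull2 : ν (⋃ A ∈ {A : Set (Fin n) | 2 ≤ A.ncard},
        {x ∈ Ω | {k : Fin n | ∀ l : Fin n,
          c (z₀ k) x - φ₀ k ≤ c (z₀ l) x - φ₀ l} = A}) = 0 :=
      (measure_biUnion_null_iff (Set.to_countable _)).2 fun A hA => hnull z₀ φ₀ A hA
    refine measure_mono_null ?_ hnull2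
    intro x hx
    simp only [Set.mem_setOf_eq, _root_.not_imp, not_exists] at hx
    obtain ⟨hxΩ, hns⟩ := hx
    set M := {k : Fin n | ∀ l : Fin n, c (z₀ k) x - φ₀ k ≤ c (z₀ l) x - φ₀ l} with hM
    have hMne : M.Nonempty := by
      obtain ⟨k, -, hk⟩ := Finset.exists_min_image Finset.univ
        (fun k : Fin n => c (z₀ k) x - φ₀ k) ⟨i, Finset.mem_univ i⟩
      exact ⟨k, fun l => hk l (Finset.mem_univ l)⟩
    have hcard : 2 ≤ M.ncard := by
      rcases Nat.lt_or_ge M.ncard 2 with h | h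
      · interval_cases h' : M.ncard
        · exact absurd ((Set.ncard_eq_zero (M.toFinite)).1 h') hMne.ne_empty
        · obtain ⟨a, ha⟩ := Set.ncard_eq_one.1 h'
          exact absurd ha (hns a)
      · exact h
    exact Set.mem_biUnion hcard ⟨hxΩ, rfl⟩
  -- rewrite integrals as indicator integrals
  have heq : ∀ p : (Fin n → EuclideanSpace ℝ (Fin d)) × (Fin n → ℝ),
      (∫ x in {x ∈ Ω | ∀ j : Fin n, c (p.1 i) x - p.2 i ≤ c (p.1 j) x - p.2 j},
        f p.1 p.2 x ∂ν) = ∫ x, (S p).indicator (f p.1 p.2) x ∂ν := fun p =>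
    (integral_indicator (hSmeas p)).symm
  have heq0 : (∫ x in {x ∈ Ω | ∀ j : Fin n, c (z₀ i) x - φ₀ i ≤ c (z₀ j) x - φ₀ j},
      f z₀ φ₀ x ∂ν) = ∫ x, (S (z₀, φ₀)).indicator (f z₀ φ₀) x ∂ν :=
    (integral_indicator (hSmeas (z₀, φ₀))).symm
  simp only [ContinuousAt, heq]
  rw [heq0]
  apply tendsto_integral_filter_of_dominated_convergence l
  · exact Filter.Eventually.of_forall fun p => (hfmeas p.1 p.2).indicator (hSmeas p)
  · refine Filter.Eventually.of_forall fun p => ?_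
    filter_upwards [hfbound p.1 p.2] with x hx
    by_cases hxS : x ∈ S p
    · rw [Set.indicator_of_mem hxS]
      simpa using hx
    · rw [Set.indicator_of_notMem hxS]
      simpa using (abs_nonneg _).trans hx
  · exact hl
  · filter_upwards [hfcont, hae] with x hx1 hx2
    by_cases hxΩ : x ∈ Ω
    · obtain ⟨j, hj⟩ := hx2 hxΩ
      have hg : ∀ k : Fin n, Continuous fun p :
          (Fin n → EuclideanSpace ℝ (Fin d)) × (Fin n → ℝ) =>
          c (p.1 k) x - p.2 k := fun k =>
        ((hc.comp ((((continuous_apply k).comp continuous_fst).prodMk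
          continuous_const))).sub ((continuous_apply k).comp continuous_snd)).congr fun _ => rfl
      by_cases hij : j = i
      · subst hij
        -- i is the unique minimizer; eventually x ∈ S p
        have hjmem : ∀ l : Fin n, c (z₀ j) x - φ₀ j ≤ c (z₀ l) x - φ₀ l := by
          have : j ∈ ({j} : Set (Fin n)) := rfl
          rw [← hj] at this; exact this
        have hstrict : ∀ k : Fin n, k ≠ j →
            c (z₀ j) x - φ₀ j < c (z₀ k) x - φ₀ k := by
          intro k hk
          have hkn : k ∉ ({j} : Set (Fin n)) := by simp [hk]
          rw [← hj] at hkn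
          simp only [Set.mem_setOf_eq, not_forall, not_le] at hkn
          obtain ⟨l, hl⟩ := hkn
          exact lt_of_le_of_lt (hjmem l) hl
        have hev : ∀ᶠ p : (Fin n → EuclideanSpace ℝ (Fin d)) × (Fin n → ℝ)
            in nhds (z₀, φ₀),
            ∀ k : Fin n, c (p.1 j) x - p.2 j ≤ c (p.1 k) x - p.2 k := by
          rw [Filter.eventually_all]
          intro k
          by_cases hk : k = j
          · subst hk; exact Filter.Eventually.of_forall fun p => le_rfl
          · exact (((hg j).tendsto (z₀, φ₀)).eventually_lt
              ((hg k).tendsto (z₀, φ₀)) (hstrict k hk)).mono fun p hp => hp.le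
        have hxS0 : x ∈ S (z₀, φ₀) := ⟨hxΩ, hjmem⟩
        rw [Set.indicator_of_mem hxS0]
        refine Filter.Tendsto.congr' ?_ (hx1.tendsto (z₀, φ₀))
        filter_upwards [hev] with p hp
        exact (Set.indicator_of_mem (show x ∈ S p from ⟨hxΩ, hp⟩) _).symm
      · -- i is not a minimizer; eventually x ∉ S p
        have hjmem : ∀ l : Fin n, c (z₀ j) x - φ₀ j ≤ c (z₀ l) x - φ₀ l := by
          have : j ∈ ({j} : Set (Fin n)) := rfl
          rw [← hj] at this; exact this
        have hstrict : c (z₀ j) x - φ₀ j < c (z₀ i) x - φ₀ i := by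
          rcases lt_or_eq_of_le (hjmem i) with h | h
          · exact h
          · exfalso
            have hi : i ∈ ({j} : Set (Fin n)) := by
              rw [← hj]
              intro l
              rw [← h]
              exact hjmem l
            exact hij (Set.mem_singleton_iff.1 hi).symm
        have hev : ∀ᶠ p : (Fin n → EuclideanSpace ℝ (Fin d)) × (Fin n → ℝ)
            in nhds (z₀, φ₀),
            c (p.1 j) x - p.2 j < c (p.1 i) x - p.2 i :=
          ((hg j).tendsto (z₀, φ₀)).eventually_lt ((hg i).tendsto (z₀, φ₀)) hstrict
        have hxS0 : x ∉ S (z₀, φ₀) := by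
          rintro ⟨-, h⟩
          exact absurd (h j) (not_le.2 hstrict)
        rw [Set.indicator_of_notMem hxS0]
        refine Filter.Tendsto.congr' ?_ tendsto_const_nhds
        filter_upwards [hev] with p hp
        refine (Set.indicator_of_notMem ?_ _).symm
        rintro ⟨-, h⟩
        exact absurd (h j) (not_le.2 hp)
    · have hnot : ∀ p : (Fin n → EuclideanSpace ℝ (Fin d)) × (Fin n → ℝ),
          x ∉ S p := fun p hp => hxΩ hp.1
      simp only [Set.indicator_of_notMem (hnot _)]
      exact tendsto_const_nhds
end
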